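/- Let S, T be n×n complex Hermitian matrices with 0 ≤ S ≤ 1 and 0 ≤ T ≤ 1, and set M := √S·√T + √(1−S)·√(1−T). Then 1 − det(M·M†)^{1/2} ≤ 1 − det(M·M†) ≤ η(S,T)². -/

import Mathlib

open scoped Classical ComplexOrder Matrix

/-- The positive semidefinite square root of a positive semidefinite matrix
(junk value `0` if the matrix is not positive semidefinite). -/
noncomputable def msqrt {n : Type*} [Fintype n] [DecidableEq n]
    (A : Matrix n n ℂ) : Matrix n n ℂ :=
  if h : A.PosSemidef then
    (h.1.eigenvectorUnitary : Matrix n n ℂ) *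
      Matrix.diagonal ((↑) ∘ (Real.sqrt ·) ∘ h.1.eigenvalues) *
      (star h.1.eigenvectorUnitary : Matrix n n ℂ)
  else 0

/-- The Hilbert-Schmidt (Frobenius) norm of a matrix. -/
noncomputable def frob {n : Type*} [Fintype n]
    (M : Matrix n n ℂ) : ℝ :=
  Real.sqrt (∑ i, ∑ j, ‖M i j‖ ^ 2)

/-- `η(A,B) = ‖√(1−A)·√B − √A·√(1−B)‖₂`. -/
noncomputable def eta {n : Type*} [Fintype n] [DecidableEq n]
    (A B : Matrix n n ℂ) : ℝ :=
  frob (msqrt (1 - A) * msqrt B - msqrt A * msqrt (1 - B))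

/-- The square root of a positive semidefinite matrix (removed from Mathlib). -/
noncomputable def Matrix.PosSemidef.sqrt {n : Type*} [Fintype n] [DecidableEq n]
    {A : Matrix n n ℂ} (h : A.PosSemidef) : Matrix n n ℂ :=
  (h.1.eigenvectorUnitary : Matrix n n ℂ) *
    Matrix.diagonal ((↑) ∘ (Real.sqrt ·) ∘ h.1.eigenvalues) *
    (star h.1.eigenvectorUnitary : Matrix n n ℂ)

open scoped MatrixOrder in
lemma Matrix.PosSemidef.sqrt_eq_cfcSqrt {n : Type*} [Fintype n] [DecidableEq n]
    {A : Matrix n n ℂ} (h : A.PosSemidef) : h.sqrt = CFC.sqrt A := by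
  rw [CFC.sqrt_eq_real_sqrt A h.nonneg, cfcₙ_eq_cfc, h.1.cfc_eq]
  rfl

open scoped MatrixOrder in
lemma Matrix.PosSemidef.sqrt_mul_self {n : Type*} [Fintype n] [DecidableEq n]
    {A : Matrix n n ℂ} (h : A.PosSemidef) : h.sqrt * h.sqrt = A := by
  rw [h.sqrt_eq_cfcSqrt]
  exact CFC.sqrt_mul_sqrt_self A h.nonneg

open scoped MatrixOrder in
lemma Matrix.PosSemidef.posSemidef_sqrt {n : Type*} [Fintype n] [DecidableEq n]
    {A : Matrix n n ℂ} (h : A.PosSemidef) : h.sqrt.PosSemidef := by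
  rw [h.sqrt_eq_cfcSqrt]
  exact Matrix.nonneg_iff_posSemidef.mp (CFC.sqrt_nonneg A)

open scoped MatrixOrder in
lemma Matrix.PosSemidef.eq_sqrt_of_sq_eq {n : Type*} [Fintype n] [DecidableEq n]
    {A : Matrix n n ℂ} (hA : A.PosSemidef) {B : Matrix n n ℂ} (hB : B.PosSemidef)
    (hAB : A ^ 2 = B) : A = hB.sqrt := by
  rw [hB.sqrt_eq_cfcSqrt, eq_comm, CFC.sqrt_eq_iff B A hB.nonneg hA.nonneg, ← sq, hAB]

lemma eig_le_one {m : Type*} [Fintype m] [DecidableEq m] {A : Matrix m m ℂ}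
    (hA : A.PosSemidef) (h1 : (1 - A).PosSemidef) (i : m) :
    hA.1.eigenvalues i ≤ 1 := by
  have h := h1.re_dotProduct_nonneg ⇑(hA.1.eigenvectorBasis i)
  rw [Matrix.sub_mulVec, dotProduct_sub, map_sub, Matrix.one_mulVec] at h
  have hv : RCLike.re (dotProduct (star ⇑(hA.1.eigenvectorBasis i))
      ⇑(hA.1.eigenvectorBasis i)) = 1 := by
    rw [dotProduct_comm, ← EuclideanSpace.inner_eq_star_dotProduct]
    simp [inner_self_eq_norm_sq_to_K, hA.1.eigenvectorBasis.orthonormal.1 i]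
  rw [hv, ← hA.1.eigenvalues_eq i] at h
  linarith

lemma sqrt_commute {m : Type*} [Fintype m] [DecidableEq m] {A : Matrix m m ℂ}
    (hA : A.PosSemidef) (h1 : (1 - A).PosSemidef) :
    hA.sqrt * h1.sqrt = h1.sqrt * hA.sqrt := by
  set U : Matrix m m ℂ := (hA.1.eigenvectorUnitary : Matrix m m ℂ)
  set D1 : Matrix m m ℂ := Matrix.diagonal ((↑) ∘ Real.sqrt ∘ hA.1.eigenvalues)
  set D2 : Matrix m m ℂ := Matrix.diagonal ((↑) ∘ Real.sqrt ∘ (fun i => 1 - hA.1.eigenvalues i))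
  have hUU : star U * U = 1 := (Matrix.mem_unitaryGroup_iff').mp hA.1.eigenvectorUnitary.2
  have hUU' : U * star U = 1 := (Matrix.mem_unitaryGroup_iff).mp hA.1.eigenvectorUnitary.2
  have hpsd : (U * D2 * star U).PosSemidef := by
    have := Matrix.PosSemidef.mul_mul_conjTranspose_same
      (A := D2) ?_ U
    · simpa [Matrix.star_eq_conjTranspose] using this
    · refine Matrix.posSemidef_diagonal_iff.mpr fun i ↦ ?_
      simp only [Function.comp_apply]
      exact Complex.zero_le_real.mpr (Real.sqrt_nonneg _)
  have hC : h1.sqrt = U * D2 * star U := by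
    refine (hpsd.eq_sqrt_of_sq_eq h1 ?_).symm
    · have hsq : D2 * D2 = Matrix.diagonal ((↑) ∘ (fun i => 1 - hA.1.eigenvalues i)) := by
        rw [Matrix.diagonal_mul_diagonal]
        congr! with v
        simp only [Function.comp_apply, Pi.mul_apply, ← Complex.ofReal_mul]
        rw [Real.mul_self_sqrt (by linarith [eig_le_one hA h1 v])]
      calc (U * D2 * star U) ^ 2 = U * (D2 * (star U * U) * D2) * star U := by
            rw [pow_two]; noncomm_ring
        _ = U * (D2 * D2) * star U := by rw [hUU]; noncomm_ring
        _ = 1 - A := by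
            rw [hsq]
            have hspec : A = U * Matrix.diagonal ((↑) ∘ hA.1.eigenvalues : m → ℂ) * star U :=
              hA.1.spectral_theorem
            have : Matrix.diagonal ((↑) ∘ (fun i => 1 - hA.1.eigenvalues i) : m → ℂ)
                = 1 - Matrix.diagonal ((↑) ∘ hA.1.eigenvalues : m → ℂ) := by
              rw [← Matrix.diagonal_one, Matrix.diagonal_sub]
              congr! with v
              simp
            rw [this, Matrix.mul_sub, Matrix.sub_mul, Matrix.mul_one, hUU', ← hspec]
  have hB : hA.sqrt = U * D1 * star U := rfl
  rw [hB, hC]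
  have hD : D1 * D2 = D2 * D1 := by
    rw [Matrix.diagonal_mul_diagonal, Matrix.diagonal_mul_diagonal]
    simp [mul_comm]
  calc U * D1 * star U * (U * D2 * star U) = U * (D1 * (star U * U) * D2) * star U := by
        noncomm_ring
    _ = U * (D2 * (star U * U) * D1) * star U := by rw [hUU, Matrix.mul_one, Matrix.mul_one, hD]
    _ = U * D2 * star U * (U * D1 * star U) := by noncomm_ring

lemma trace_eq_sum_eig {m : Type*} [Fintype m] [DecidableEq m] {A : Matrix m m ℂ}
    (hA : A.IsHermitian) : A.trace = ∑ i, (hA.eigenvalues i : ℂ) := by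
  conv_lhs => rw [hA.spectral_theorem, Unitary.conjStarAlgAut_apply]
  rw [Matrix.trace_mul_comm, ← Matrix.mul_assoc,
    (Matrix.mem_unitaryGroup_iff').mp hA.eigenvectorUnitary.2, Matrix.one_mul,
    Matrix.trace_diagonal]
  simp [Function.comp]

lemma weier {ι : Type*} (s : Finset ι) (f : ι → ℝ) (h0 : ∀ i ∈ s, 0 ≤ f i)
    (h1 : ∀ i ∈ s, f i ≤ 1) :
    1 - ∑ i ∈ s, (1 - f i) ≤ ∏ i ∈ s, f i := by
  classical
  induction s using Finset.induction_on with
  | empty => simp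
  | insert _ _ ha _ =>
    rename_i a s ih
    rw [Finset.sum_insert ha, Finset.prod_insert ha]
    have ih' := ih (fun i hi => h0 i (Finset.mem_insert_of_mem hi))
      (fun i hi => h1 i (Finset.mem_insert_of_mem hi))
    have ha0 : 0 ≤ f a := h0 a (Finset.mem_insert_self a s)
    have ha1 : f a ≤ 1 := h1 a (Finset.mem_insert_self a s)
    have hs0 : 0 ≤ ∑ i ∈ s, (1 - f i) :=
      Finset.sum_nonneg fun i hi => by linarith [h1 i (Finset.mem_insert_of_mem hi)]
    have hp0 : 0 ≤ ∏ i ∈ s, f i :=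
      Finset.prod_nonneg fun i hi => h0 i (Finset.mem_insert_of_mem hi)
    nlinarith [mul_le_mul_of_nonneg_left ih' ha0]

lemma frob_sq {m : Type*} [Fintype m] (N : Matrix m m ℂ) :
    frob N ^ 2 = (Matrix.trace (N * Nᴴ)).re := by
  rw [frob, Real.sq_sqrt (by positivity)]
  rw [Matrix.trace]
  simp only [Matrix.diag, Matrix.mul_apply, Matrix.conjTranspose_apply,
    RCLike.star_def, Complex.mul_conj, Complex.re_sum]
  simp [Complex.sq_norm]

lemma msqrt_eq {m : Type*} [Fintype m] [DecidableEq m] {A : Matrix m m ℂ}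
    (h : A.PosSemidef) : msqrt A = h.sqrt := dif_pos h

theorem one_sub_det_le_eta_sq {n : ℕ}
    (S T : Matrix (Fin n) (Fin n) ℂ)
    (hS : S.PosSemidef) (hS1 : (1 - S).PosSemidef)
    (hT : T.PosSemidef) (hT1 : (1 - T).PosSemidef)
    (M : Matrix (Fin n) (Fin n) ℂ)
    (hM : M = msqrt S * msqrt T + msqrt (1 - S) * msqrt (1 - T)) :
    1 - Real.sqrt ((M * Mᴴ).det.re) ≤ 1 - (M * Mᴴ).det.re ∧
      1 - (M * Mᴴ).det.re ≤ eta S T ^ 2 := by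
  set a := msqrt S with ha
  set a' := msqrt (1 - S) with ha'
  set b := msqrt T with hb
  set b' := msqrt (1 - T) with hb'
  have haa : a * a = S := by rw [ha, msqrt_eq hS]; exact hS.sqrt_mul_self
  have ha'a' : a' * a' = 1 - S := by rw [ha', msqrt_eq hS1]; exact hS1.sqrt_mul_self
  have hbb : b * b = T := by rw [hb, msqrt_eq hT]; exact hT.sqrt_mul_self
  have hb'b' : b' * b' = 1 - T := by rw [hb', msqrt_eq hT1]; exact hT1.sqrt_mul_self
  have hcomm : b * b' = b' * b := by
    rw [hb, hb', msqrt_eq hT, msqrt_eq hT1]; exact sqrt_commute hT hT1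
  have haH : aᴴ = a := by rw [ha, msqrt_eq hS]; exact hS.posSemidef_sqrt.1
  have ha'H : a'ᴴ = a' := by rw [ha', msqrt_eq hS1]; exact hS1.posSemidef_sqrt.1
  have hbH : bᴴ = b := by rw [hb, msqrt_eq hT]; exact hT.posSemidef_sqrt.1
  have hb'H : b'ᴴ = b' := by rw [hb', msqrt_eq hT1]; exact hT1.posSemidef_sqrt.1
  set D : Matrix (Fin n) (Fin n) ℂ := a' * b - a * b' with hDdef
  have key : M * Mᴴ + D * Dᴴ = 1 := by
    rw [hM, hDdef]
    simp only [Matrix.conjTranspose_add, Matrix.conjTranspose_sub, Matrix.conjTranspose_mul,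
      haH, ha'H, hbH, hb'H]
    calc (a * b + a' * b') * (b * a + b' * a') + (a' * b - a * b') * (b * a' - b' * a)
        = a * (b * b) * a + a * (b * b') * a' + a' * (b' * b) * a + a' * (b' * b') * a'
          + a' * (b * b) * a' - a' * (b * b') * a - a * (b' * b) * a' + a * (b' * b') * a := by
          noncomm_ring
      _ = a * T * a + a * (b' * b) * a' + a' * (b' * b) * a + a' * (1 - T) * a'
          + a' * T * a' - a' * (b' * b) * a - a * (b' * b) * a' + a * (1 - T) * a := by
          rw [hbb, hb'b', hcomm]
      _ = a * a + a' * a' := by noncomm_ring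
      _ = 1 := by rw [haa, ha'a']; noncomm_ring
  have hDD_eq : D * Dᴴ = 1 - M * Mᴴ := by rw [← key]; noncomm_ring
  have hMM : (M * Mᴴ).PosSemidef := Matrix.posSemidef_self_mul_conjTranspose M
  have hDD : (D * Dᴴ).PosSemidef := Matrix.posSemidef_self_mul_conjTranspose D
  have h1MM : (1 - M * Mᴴ).PosSemidef := hDD_eq ▸ hDD
  set μ : Fin n → ℝ := hMM.1.eigenvalues with hμ
  have hμ0 : ∀ i, 0 ≤ μ i := hMM.eigenvalues_nonneg
  have hμ1 : ∀ i, μ i ≤ 1 := eig_le_one hMM h1MM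
  have hdre : (M * Mᴴ).det.re = ∏ i, μ i := by
    rw [hMM.1.det_eq_prod_eigenvalues]
    norm_cast
  have hd0 : 0 ≤ ∏ i, μ i := Finset.prod_nonneg fun i _ => hμ0 i
  have hd1 : (∏ i, μ i) ≤ 1 :=
    Finset.prod_le_one (fun i _ => hμ0 i) (fun i _ => hμ1 i)
  constructor
  · rw [hdre]
    have hle : (∏ i, μ i) ≤ Real.sqrt (∏ i, μ i) := by
      calc (∏ i, μ i) = Real.sqrt ((∏ i, μ i) ^ 2) := (Real.sqrt_sq hd0).symm
        _ ≤ Real.sqrt (∏ i, μ i) := Real.sqrt_le_sqrt (by nlinarith)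
    linarith
  · have heta : eta S T ^ 2 = (Matrix.trace (D * Dᴴ)).re := frob_sq D
    have htr : (Matrix.trace (D * Dᴴ)).re = ∑ i, (1 - μ i) := by
      rw [hDD_eq, Matrix.trace_sub, Matrix.trace_one, trace_eq_sum_eig hMM.1]
      rw [Finset.sum_sub_distrib, Finset.sum_const, Finset.card_univ, Fintype.card_fin]
      simp
      rfl
    rw [heta, htr, hdre]
    have := weier Finset.univ μ (fun i _ => hμ0 i) (fun i _ => hμ1 i)
    linarith
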